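/- Core identity in the proof of Proposition 1 (Φ(x) ⊛ (D_xΦ y) = 0): let w₁, w₂ be unit quaternions and let z = a + b • i with a, b ∈ ℝ. Then (conj(w₁) * i * w₁, conj(w₁) * w₂) ⊛ (conj(w₁) * z * k * w₁, conj(w₁) * z * j * w₂) = (0, 0). -/

import Mathlib

open Quaternion

noncomputable section

/-- The quaternion imaginary unit `i`. -/
def qi : ℍ[ℝ] := ⟨0, 1, 0, 0⟩

/-- The quaternion imaginary unit `j`. -/
def qj : ℍ[ℝ] := ⟨0, 0, 1, 0⟩

/-- The quaternion imaginary unit `k`. -/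
def qk : ℍ[ℝ] := ⟨0, 0, 0, 1⟩

/-- The split-octonion product on `ℍ × ℍ`: `(a,b) ⊛ (c,d) = (a*c + d*conj b, conj a * d + c*b)`. -/
def omul (x y : ℍ[ℝ] × ℍ[ℝ]) : ℍ[ℝ] × ℍ[ℝ] :=
  (x.1 * y.1 + y.2 * star x.2, star x.1 * y.2 + y.1 * x.2)

/-! For unit quaternions `w₁, w₂`, the map `(p, q) ↦ (w̄₁ p w₁, w̄₁ q w₂)` preserves `⊛`, so the
identity reduces to `(i, 1) ⊛ (z k, z j) = 0`. Since `z = a + b i` commutes with `i`, this is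
`(z (i k + j), z (k - i j)) = 0`. -/

lemma star_qi : star qi = -qi := by
  rw [star_eq_neg]
  simp [qi]

lemma qi_mul_qj : qi * qj = qk := by
  ext <;> simp <;> simp [qi, qj, qk]

lemma qi_mul_qk : qi * qk = -qj := by
  ext <;> simp <;> simp [qi, qj, qk]

lemma commute_qi_coe_add_smul_qi (a b : ℝ) : Commute qi ((a : ℍ[ℝ]) + b • qi) :=
  (coe_commute a qi).symm.add_right ((Commute.refl qi).smul_right b)

def twist (w₁ w₂ : ℍ[ℝ]) (x : ℍ[ℝ] × ℍ[ℝ]) : ℍ[ℝ] × ℍ[ℝ] :=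
  (star w₁ * x.1 * w₁, star w₁ * x.2 * w₂)

lemma omul_twist {w₁ w₂ : ℍ[ℝ]} (h₁ : w₁ * star w₁ = 1) (h₂ : w₂ * star w₂ = 1)
    (x y : ℍ[ℝ] × ℍ[ℝ]) :
    omul (twist w₁ w₂ x) (twist w₁ w₂ y) = twist w₁ w₂ (omul x y) := by
  have cancel₁ (c : ℍ[ℝ]) : w₁ * (star w₁ * c) = c := by rw [← mul_assoc, h₁, one_mul]
  have cancel₂ (c : ℍ[ℝ]) : w₂ * (star w₂ * c) = c := by rw [← mul_assoc, h₂, one_mul]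
  simp only [omul, twist, star_mul, star_star, mul_add, add_mul, mul_assoc, cancel₁, cancel₂]

lemma omul_qi_one_eq_zero {z : ℍ[ℝ]} (hz : Commute qi z) :
    omul (qi, 1) (z * qk, z * qj) = (0, 0) := by
  have hk : qi * (z * qk) = -(z * qj) := by rw [← mul_assoc, hz.eq, mul_assoc, qi_mul_qk, mul_neg]
  have hj : qi * (z * qj) = z * qk := by rw [← mul_assoc, hz.eq, mul_assoc, qi_mul_qj]
  simp [omul, star_qi, hk, hj]

/-- Core identity in the proof of Proposition 1: `Φ(x) ⊛ (D_xΦ y) = 0`. -/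
theorem phi_image_annihilates_differential (w₁ w₂ : ℍ[ℝ])
    (h₁ : normSq w₁ = 1) (h₂ : normSq w₂ = 1) (a b : ℝ) :
    omul (star w₁ * qi * w₁, star w₁ * w₂)
         (star w₁ * ((a : ℍ[ℝ]) + b • qi) * qk * w₁,
          star w₁ * ((a : ℍ[ℝ]) + b • qi) * qj * w₂) = (0, 0) := by
  have hu₁ : w₁ * star w₁ = 1 := by rw [self_mul_star, h₁, coe_one]
  have hu₂ : w₂ * star w₂ = 1 := by rw [self_mul_star, h₂, coe_one]
  set z : ℍ[ℝ] := (a : ℍ[ℝ]) + b • qi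
  calc _ = twist w₁ w₂ (omul (qi, 1) (z * qk, z * qj)) := by
        rw [← omul_twist hu₁ hu₂]
        simp only [twist, mul_one, mul_assoc]
    _ = (0, 0) := by
        rw [omul_qi_one_eq_zero (commute_qi_coe_add_smul_qi a b)]
        simp [twist]
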